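/- Consider the approximate DPP iteration with parameter η > 0 started from Ψ_0 with ‖Ψ_0‖ ≤ V_max, with error functions ε_k and accumulated errors E_k = Σ_{j=0}^k ε_j. Then for every integer k ≥ 0, the policy π_k induced at round k satisfies ‖Q* − Q^{π_k}‖ ≤ (1 / ((1−γ)(k+1))) [ 2γ(4 V_max + log(L)/η)/(1−γ) + 2 Σ_{j=0}^{k} γ^{k−j} ‖E_j‖ ]. -/

import Mathlib

/-!
Write `V* = max_a Q*`, `m_k = π_k Ψ_k` and `S_k = Σ_{j<k} (V* - m_j)`. Unrolling the recursion with
`Q* = r + γ P V*` gives `Ψ_k = W_k - k (V* - Q*) + S_k`, where `W_k = Ψ_0 + Σ_{j<k} ε_j - γ P S_k`.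
Since a soft-max average lies within `log L / η` of the maximum, both the span
`max S_{k+1} - min S_{k+1}` and `(k + 1) (V* - π_k Q*)` are at most
`γ span(S_k) + 4 V_max + log L / η + 2 ‖Σ_{j<k} ε_j‖`.
Solving this span recursion and using `(1 - γ) ‖Q* - Q^π‖ ≤ γ ‖V* - π Q*‖` gives the bound.
-/

open Finset Real Filter

variable {X A : Type*}

/-- `(πQ)(x) = Σ_a π(a|x) Q(x,a)`. -/
noncomputable def polApply [Fintype A] (pol : X → A → ℝ) (Q : X → A → ℝ) : X → ℝ :=
  fun x => ∑ a, pol x a * Q x a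

/-- Bellman operator `T^π`. -/
noncomputable def bellman [Fintype X] [Fintype A]
    (P : X → A → X → ℝ) (r : X → A → ℝ) (γ : ℝ) (pol : X → A → ℝ)
    (Q : X → A → ℝ) : X → A → ℝ :=
  fun x a => r x a + γ * ∑ x', ∑ a', P x a x' * pol x' a' * Q x' a'

/-- Bellman optimality operator `T`. -/
noncomputable def bellmanOpt [Fintype X] [Fintype A] [Nonempty A]
    (P : X → A → X → ℝ) (r : X → A → ℝ) (γ : ℝ) (Q : X → A → ℝ) : X → A → ℝ :=
  fun x a => r x a + γ * ∑ x', P x a x' * (Finset.univ.sup' Finset.univ_nonempty (Q x'))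

/-- Soft-max policy associated with action preferences `Ψ` at inverse temperature `η`. -/
noncomputable def softmaxPol [Fintype A] (η : ℝ) (Ψ : X → A → ℝ) : X → A → ℝ :=
  fun x a => Real.exp (η * Ψ x a) / ∑ a', Real.exp (η * Ψ x a')

/-- Supremum norm over state-action pairs. -/
noncomputable def supNorm [Fintype X] [Fintype A] [Nonempty X] [Nonempty A]
    (Q : X → A → ℝ) : ℝ :=
  Finset.univ.sup' Finset.univ_nonempty (fun p : X × A => |Q p.1 p.2|)

section StdSimplex

variable {ι : Type*} [Fintype ι] {p q f : ι → ℝ} {M : ℝ}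

lemma sum_mul_le_of_forall_le (hp : p ∈ stdSimplex ℝ ι) (hf : ∀ i, f i ≤ M) :
    ∑ i, p i * f i ≤ M :=
  calc ∑ i, p i * f i ≤ ∑ i, p i * M :=
        sum_le_sum fun i _ => mul_le_mul_of_nonneg_left (hf i) (hp.1 i)
    _ = M := by rw [← sum_mul, hp.2, one_mul]

lemma le_sum_mul_of_forall_le (hp : p ∈ stdSimplex ℝ ι) (hf : ∀ i, M ≤ f i) :
    M ≤ ∑ i, p i * f i :=
  calc M = ∑ i, p i * M := by rw [← sum_mul, hp.2, one_mul]
    _ ≤ ∑ i, p i * f i := sum_le_sum fun i _ => mul_le_mul_of_nonneg_left (hf i) (hp.1 i)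

lemma abs_sum_mul_le (hp : p ∈ stdSimplex ℝ ι) (hf : ∀ i, |f i| ≤ M) :
    |∑ i, p i * f i| ≤ M :=
  abs_le.2 ⟨le_sum_mul_of_forall_le hp fun i => neg_le_of_abs_le (hf i),
    sum_mul_le_of_forall_le hp fun i => le_of_abs_le (hf i)⟩

variable [Nonempty ι]

def spanSeminorm (f : ι → ℝ) : ℝ :=
  univ.sup' univ_nonempty f - univ.inf' univ_nonempty f

lemma sub_le_spanSeminorm (f : ι → ℝ) (i j : ι) : f i - f j ≤ spanSeminorm f :=
  sub_le_sub (le_sup' f (mem_univ i)) (inf'_le f (mem_univ j))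

lemma spanSeminorm_le (h : ∀ i j, f i - f j ≤ M) : spanSeminorm f ≤ M := by
  obtain ⟨i, -, hi⟩ := exists_mem_eq_sup' univ_nonempty f
  obtain ⟨j, -, hj⟩ := exists_mem_eq_inf' univ_nonempty f
  rw [spanSeminorm, hi, hj]
  exact h i j

lemma sum_mul_sub_sum_mul_le_spanSeminorm (hp : p ∈ stdSimplex ℝ ι) (hq : q ∈ stdSimplex ℝ ι)
    (f : ι → ℝ) : ∑ i, p i * f i - ∑ i, q i * f i ≤ spanSeminorm f :=
  sub_le_sub (sum_mul_le_of_forall_le hp fun i => le_sup' f (mem_univ i))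
    (le_sum_mul_of_forall_le hq fun i => inf'_le f (mem_univ i))

end StdSimplex

section SupNorm

variable [Fintype X] [Fintype A] [Nonempty X] [Nonempty A]

lemma abs_le_supNorm (Q : X → A → ℝ) (x : X) (a : A) : |Q x a| ≤ supNorm Q :=
  le_sup' (fun p : X × A => |Q p.1 p.2|) (mem_univ (x, a))

lemma supNorm_le {Q : X → A → ℝ} {B : ℝ} (h : ∀ x a, |Q x a| ≤ B) : supNorm Q ≤ B :=
  sup'_le _ _ fun p _ => h p.1 p.2

lemma supNorm_nonneg (Q : X → A → ℝ) : 0 ≤ supNorm Q :=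
  (abs_nonneg _).trans (abs_le_supNorm Q (Classical.arbitrary X) (Classical.arbitrary A))

lemma sub_le_two_mul_supNorm (Q : X → A → ℝ) (x y : X) (a b : A) :
    Q x a - Q y b ≤ 2 * supNorm Q := by
  linarith [le_of_abs_le (abs_le_supNorm Q x a), neg_le_of_abs_le (abs_le_supNorm Q y b)]

end SupNorm

def maxValue [Fintype A] [Nonempty A] (Q : X → A → ℝ) (x : X) : ℝ :=
  univ.sup' univ_nonempty (Q x)

section Policies

variable [Fintype A] [Nonempty A]

lemma le_maxValue (Q : X → A → ℝ) (x : X) (a : A) : Q x a ≤ maxValue Q x :=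
  le_sup' (Q x) (mem_univ a)

lemma polApply_le_maxValue {pol : X → A → ℝ} {x : X} (hpol : pol x ∈ stdSimplex ℝ A)
    (Q : X → A → ℝ) : polApply pol Q x ≤ maxValue Q x :=
  sum_mul_le_of_forall_le hpol (le_maxValue Q x)

lemma abs_maxValue_le_supNorm [Fintype X] [Nonempty X] (Q : X → A → ℝ) (x : X) :
    |maxValue Q x| ≤ supNorm Q := by
  obtain ⟨a, -, ha⟩ := exists_mem_eq_sup' univ_nonempty (Q x)
  rw [maxValue, ha]
  exact abs_le_supNorm Q x a

lemma softmaxPol_mem_stdSimplex (η : ℝ) (Ψ : X → A → ℝ) (x : X) :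
    softmaxPol η Ψ x ∈ stdSimplex ℝ A := by
  have hZ : 0 < ∑ a, exp (η * Ψ x a) := sum_pos (fun a _ => exp_pos _) univ_nonempty
  refine ⟨fun a => (div_pos (exp_pos _) hZ).le, ?_⟩
  simp only [softmaxPol, ← sum_div, div_self hZ.ne']

/-- Jensen's inequality for `log` at the points `1 / π(a|x) = Z / exp (η Ψ(x,a))`, where `Z` is the
partition function. -/
lemma maxValue_sub_le_polApply_softmaxPol {η : ℝ} (hη : 0 < η) (Ψ : X → A → ℝ) (x : X) :
    maxValue Ψ x - log (Fintype.card A) / η ≤ polApply (softmaxPol η Ψ) Ψ x := by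
  set Z := ∑ a, exp (η * Ψ x a) with hZdef
  have hZ : 0 < Z := sum_pos (fun a _ => exp_pos _) univ_nonempty
  have hπ := softmaxPol_mem_stdSimplex η Ψ x
  have hjensen := strictConcaveOn_log_Ioi.concaveOn.le_map_sum (t := univ)
    (fun a _ => hπ.1 a) hπ.2 (p := fun a => Z / exp (η * Ψ x a))
    (fun a _ => div_pos hZ (exp_pos _))
  have hcard : ∑ a, softmaxPol η Ψ x a • (Z / exp (η * Ψ x a)) = Fintype.card A := by
    simp [softmaxPol, ← hZdef, hZ.ne', (exp_pos _).ne']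
  have hlog : ∑ a, softmaxPol η Ψ x a • log (Z / exp (η * Ψ x a)) =
      log Z - η * polApply (softmaxPol η Ψ) Ψ x := by
    simp only [smul_eq_mul, log_div hZ.ne' (exp_pos _).ne', log_exp, mul_sub, sum_sub_distrib,
      ← sum_mul, hπ.2, one_mul, polApply, mul_sum]
    congr 1
    exact sum_congr rfl fun a _ => by ring
  have hmax : η * maxValue Ψ x ≤ log Z := by
    obtain ⟨a, -, ha⟩ := exists_mem_eq_sup' univ_nonempty (Ψ x)
    rw [maxValue, ha, le_log_iff_exp_le hZ]
    exact single_le_sum (f := fun a => exp (η * Ψ x a)) (fun _ _ => (exp_pos _).le) (mem_univ a)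
  rw [hcard, hlog] at hjensen
  rw [sub_le_iff_le_add, ← sub_le_iff_le_add', sub_le_iff_le_add, div_add' _ _ _ hη.ne',
    le_div_iff₀' hη]
  linarith

end Policies

section Bellman

variable [Fintype X] [Fintype A]

lemma bellman_apply (P : X → A → X → ℝ) (r : X → A → ℝ) (γ : ℝ) (pol Q : X → A → ℝ)
    (x : X) (a : A) :
    bellman P r γ pol Q x a = r x a + γ * ∑ x', P x a x' * polApply pol Q x' := by
  simp only [bellman, polApply, mul_sum, mul_assoc]

lemma bellmanOpt_apply [Nonempty A] (P : X → A → X → ℝ) (r : X → A → ℝ) (γ : ℝ)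
    (Q : X → A → ℝ) (x : X) (a : A) :
    bellmanOpt P r γ Q x a = r x a + γ * ∑ x', P x a x' * maxValue Q x' :=
  rfl

variable [Nonempty X] [Nonempty A] {P : X → A → X → ℝ} {r : X → A → ℝ} {γ : ℝ}

lemma supNorm_le_of_bellmanOpt_eq (hP : ∀ x a, P x a ∈ stdSimplex ℝ X) {Rmax : ℝ}
    (hr : ∀ x a, |r x a| ≤ Rmax) (hγ0 : 0 ≤ γ) (hγ1 : γ < 1) {Q : X → A → ℝ}
    (hQ : bellmanOpt P r γ Q = Q) : supNorm Q ≤ Rmax / (1 - γ) := by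
  have hcontr : supNorm Q ≤ Rmax + γ * supNorm Q := by
    refine supNorm_le fun x a => ?_
    rw [← congrFun₂ hQ x a, bellmanOpt_apply]
    calc |r x a + γ * ∑ x', P x a x' * maxValue Q x'|
        ≤ |r x a| + γ * |∑ x', P x a x' * maxValue Q x'| := by
          rw [← abs_of_nonneg hγ0, ← abs_mul, abs_of_nonneg hγ0]; exact abs_add_le _ _
      _ ≤ Rmax + γ * supNorm Q := by
          gcongr
          · exact hr x a
          · exact abs_sum_mul_le (hP x a) (abs_maxValue_le_supNorm Q)
  rw [le_div_iff₀ (sub_pos.2 hγ1)]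
  linarith

/-- `Q* - Q^pol = γ P (V* - pol Q*) + γ P pol (Q* - Q^pol)`. -/
lemma one_sub_mul_supNorm_sub_le (hP : ∀ x a, P x a ∈ stdSimplex ℝ X) (hγ0 : 0 ≤ γ)
    {pol Qs Qp : X → A → ℝ} (hpol : ∀ x, pol x ∈ stdSimplex ℝ A)
    (hQs : bellmanOpt P r γ Qs = Qs) (hQp : bellman P r γ pol Qp = Qp) {M : ℝ}
    (hM : ∀ x, maxValue Qs x - polApply pol Qs x ≤ M) :
    (1 - γ) * supNorm (fun x a => Qs x a - Qp x a) ≤ γ * M := by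
  set N := supNorm (fun x a => Qs x a - Qp x a)
  have hnext : ∀ x, |maxValue Qs x - polApply pol Qp x| ≤ M + N := fun x => by
    have hsplit : maxValue Qs x - polApply pol Qp x = (maxValue Qs x - polApply pol Qs x) +
        ∑ a, pol x a * (Qs x a - Qp x a) := by
      simp only [polApply, mul_sub, sum_sub_distrib]; ring
    rw [hsplit]
    refine (abs_add_le _ _).trans (add_le_add ?_ ?_)
    · rw [abs_of_nonneg (sub_nonneg.2 (polApply_le_maxValue (hpol x) Qs))]
      exact hM x
    · exact abs_sum_mul_le (hpol x) (abs_le_supNorm (fun x a => Qs x a - Qp x a) x)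
  have hcontr : N ≤ γ * (M + N) := by
    refine supNorm_le fun x a => ?_
    have hdiff : Qs x a - Qp x a = γ * ∑ x', P x a x' * (maxValue Qs x' - polApply pol Qp x') := by
      conv_lhs => rw [← hQs, ← hQp]
      simp only [bellmanOpt_apply, bellman_apply, mul_sub, sum_sub_distrib]; ring
    rw [hdiff, abs_mul, abs_of_nonneg hγ0]
    exact mul_le_mul_of_nonneg_left (abs_sum_mul_le (hP x a) hnext) hγ0
  linarith

end Bellman

def accErr (ε : ℕ → X → A → ℝ) (k : ℕ) (x : X) (a : A) : ℝ :=
  ∑ j ∈ range k, ε j x a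

section DiscountedSums

variable {γ : ℝ}

lemma mul_add_le_sum_pow_mul {o u : ℕ → ℝ} (hγ0 : 0 ≤ γ) (h0 : o 0 ≤ 0)
    (hrec : ∀ k, o (k + 1) ≤ γ * o k + u k) (k : ℕ) :
    γ * o k + u k ≤ ∑ j ∈ range (k + 1), γ ^ (k - j) * u j := by
  induction k with
  | zero => simpa using mul_nonpos_of_nonneg_of_nonpos hγ0 h0
  | succ k ih =>
    have hshift : ∑ j ∈ range (k + 1), γ ^ (k + 1 - j) * u j =
        γ * ∑ j ∈ range (k + 1), γ ^ (k - j) * u j := by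
      rw [mul_sum]
      refine sum_congr rfl fun j hj => ?_
      rw [Nat.sub_add_comm (mem_range_succ_iff.1 hj), pow_succ]
      ring
    rw [sum_range_succ, hshift, Nat.sub_self, pow_zero, one_mul]
    linarith [mul_le_mul_of_nonneg_left (hrec k) hγ0, mul_le_mul_of_nonneg_left ih hγ0]

lemma sum_range_pow_sub_le (hγ0 : 0 ≤ γ) (hγ1 : γ < 1) (k : ℕ) :
    ∑ j ∈ range (k + 1), γ ^ (k - j) ≤ 1 / (1 - γ) := by
  have hreflect := sum_range_reflect (fun j => γ ^ j) (k + 1)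
  simp only [Nat.add_sub_cancel] at hreflect
  rw [hreflect, range_eq_Ico]
  simpa using geom_sum_Ico_le_of_lt_one (m := 0) (n := k + 1) hγ0 hγ1

variable [Fintype X] [Fintype A] [Nonempty X] [Nonempty A]

lemma mul_sum_pow_mul_supNorm_accErr_le (hγ0 : 0 ≤ γ) (ε : ℕ → X → A → ℝ) (k : ℕ) :
    γ * ∑ j ∈ range (k + 1), γ ^ (k - j) * supNorm (accErr ε j) ≤
      ∑ j ∈ range (k + 1), γ ^ (k - j) * supNorm (accErr ε (j + 1)) := by
  have h0 : supNorm (accErr ε 0) = 0 :=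
    le_antisymm (supNorm_le fun x a => by simp [accErr]) (supNorm_nonneg _)
  have hshift : ∀ i ∈ range k, γ * (γ ^ (k - (i + 1)) * supNorm (accErr ε (i + 1))) =
      γ ^ (k - i) * supNorm (accErr ε (i + 1)) := fun i hi => by
    rw [← mul_assoc, ← pow_succ', Nat.sub_add_eq, Nat.sub_add_cancel (Nat.sub_pos_of_lt
      (mem_range.1 hi))]
  rw [mul_sum, sum_range_succ', sum_congr rfl hshift, h0, mul_zero, mul_zero, add_zero,
    sum_range_succ]
  exact le_add_of_nonneg_right (mul_nonneg (pow_nonneg hγ0 _) (supNorm_nonneg _))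

lemma mul_sum_pow_mul_add_supNorm_accErr_le (hγ0 : 0 ≤ γ) (hγ1 : γ < 1) {B : ℝ} (hB : 0 ≤ B)
    (ε : ℕ → X → A → ℝ) (k : ℕ) :
    γ * ∑ j ∈ range (k + 1), γ ^ (k - j) * (B + 2 * supNorm (accErr ε j)) ≤
      γ * B / (1 - γ) + 2 * ∑ j ∈ range (k + 1), γ ^ (k - j) * supNorm (accErr ε (j + 1)) := by
  have hsplit : ∑ j ∈ range (k + 1), γ ^ (k - j) * (B + 2 * supNorm (accErr ε j)) =
      B * ∑ j ∈ range (k + 1), γ ^ (k - j) +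
        2 * ∑ j ∈ range (k + 1), γ ^ (k - j) * supNorm (accErr ε j) := by
    simp only [mul_add, sum_add_distrib, mul_sum]
    congr 1 <;> exact sum_congr rfl fun j _ => by ring
  have hgeom := mul_le_mul_of_nonneg_left (sum_range_pow_sub_le hγ0 hγ1 k) (mul_nonneg hγ0 hB)
  rw [mul_one_div] at hgeom
  rw [hsplit]
  linarith [mul_sum_pow_mul_supNorm_accErr_le hγ0 ε k]

end DiscountedSums

section DPP

variable [Fintype A] [Nonempty A]

def IsDPPIteration [Fintype X] (P : X → A → X → ℝ) (r : X → A → ℝ) (γ η : ℝ)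
    (ε : ℕ → X → A → ℝ) (Ψ : ℕ → X → A → ℝ) : Prop :=
  ∀ k x a, Ψ (k + 1) x a = Ψ k x a + bellman P r γ (softmaxPol η (Ψ k)) (Ψ k) x a -
    polApply (softmaxPol η (Ψ k)) (Ψ k) x + ε k x a

noncomputable def dppDrift (η : ℝ) (Qs : X → A → ℝ) (Ψ : ℕ → X → A → ℝ) (k : ℕ) (x : X) : ℝ :=
  ∑ j ∈ range k, (maxValue Qs x - polApply (softmaxPol η (Ψ j)) (Ψ j) x)

lemma dppDrift_succ (η : ℝ) (Qs : X → A → ℝ) (Ψ : ℕ → X → A → ℝ) (k : ℕ) (x : X) :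
    dppDrift η Qs Ψ (k + 1) x =
      dppDrift η Qs Ψ k x + (maxValue Qs x - polApply (softmaxPol η (Ψ k)) (Ψ k) x) :=
  sum_range_succ _ _

noncomputable def dppOffset [Fintype X] (P : X → A → X → ℝ) (γ η : ℝ) (Qs : X → A → ℝ)
    (Ψ : ℕ → X → A → ℝ) (ε : ℕ → X → A → ℝ) (k : ℕ) (x : X) (a : A) : ℝ :=
  Ψ 0 x a + accErr ε k x a - γ * ∑ x', P x a x' * dppDrift η Qs Ψ k x'

variable [Fintype X] {P : X → A → X → ℝ} {r : X → A → ℝ} {γ η : ℝ} {Qs : X → A → ℝ}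
  {Ψ : ℕ → X → A → ℝ} {ε : ℕ → X → A → ℝ}

lemma spanSeminorm_dppOffset_le [Nonempty X] (hP : ∀ x a, P x a ∈ stdSimplex ℝ X) (hγ0 : 0 ≤ γ)
    {V : ℝ} (hΨ0 : supNorm (Ψ 0) ≤ V) (k : ℕ) :
    spanSeminorm (Function.uncurry (dppOffset P γ η Qs Ψ ε k)) ≤
      2 * V + 2 * supNorm (accErr ε k) + γ * spanSeminorm (dppDrift η Qs Ψ k) := by
  refine spanSeminorm_le fun ⟨x, a⟩ ⟨y, b⟩ => ?_
  have hS := sum_mul_sub_sum_mul_le_spanSeminorm (hP y b) (hP x a) (dppDrift η Qs Ψ k)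
  have hΨ0' := sub_le_two_mul_supNorm (Ψ 0) x y a b
  have hε := sub_le_two_mul_supNorm (accErr ε k) x y a b
  simp only [Function.uncurry, dppOffset]
  linarith [mul_le_mul_of_nonneg_left hS hγ0]

namespace IsDPPIteration

variable (hΨ : IsDPPIteration P r γ η ε Ψ) (hQs : bellmanOpt P r γ Qs = Qs)
include hΨ hQs

lemma eq_offset_sub_gap_add_drift (k : ℕ) (x : X) (a : A) :
    Ψ k x a = dppOffset P γ η Qs Ψ ε k x a - k * (maxValue Qs x - Qs x a) +
      dppDrift η Qs Ψ k x := by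
  induction k generalizing x a with
  | zero => simp [dppOffset, dppDrift, accErr]
  | succ k ih =>
    rw [hΨ k x a, ih x a, bellman_apply, ← congrFun₂ hQs x a, bellmanOpt_apply]
    simp only [dppOffset, dppDrift_succ, accErr, sum_range_succ, mul_add, mul_sub,
      sum_add_distrib, sum_sub_distrib]
    push_cast
    ring

lemma le_polApply_softmaxPol (hη : 0 < η) (k : ℕ) {x : X} {a : A} (ha : Qs x a = maxValue Qs x) :
    dppOffset P γ η Qs Ψ ε k x a + dppDrift η Qs Ψ k x - log (Fintype.card A) / η ≤
      polApply (softmaxPol η (Ψ k)) (Ψ k) x := by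
  have hmax := le_maxValue (Ψ k) x a
  rw [hΨ.eq_offset_sub_gap_add_drift hQs k x a, ha, sub_self, mul_zero, sub_zero] at hmax
  linarith [maxValue_sub_le_polApply_softmaxPol hη (Ψ k) x]

lemma polApply_softmaxPol_le (k : ℕ) (x : X) :
    polApply (softmaxPol η (Ψ k)) (Ψ k) x ≤
      maxValue (dppOffset P γ η Qs Ψ ε k) x + dppDrift η Qs Ψ k x := by
  refine sum_mul_le_of_forall_le (softmaxPol_mem_stdSimplex η (Ψ k) x) fun a => ?_
  rw [hΨ.eq_offset_sub_gap_add_drift hQs k x a]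
  have hgap := mul_nonneg (Nat.cast_nonneg k) (sub_nonneg.2 (le_maxValue Qs x a))
  linarith [le_maxValue (dppOffset P γ η Qs Ψ ε k) x a]

lemma mul_gap_le (hη : 0 < η) (k : ℕ) {x : X} {a : A} (ha : Qs x a = maxValue Qs x) :
    k * (maxValue Qs x - polApply (softmaxPol η (Ψ k)) Qs x) ≤
      maxValue (dppOffset P γ η Qs Ψ ε k) x - dppOffset P γ η Qs Ψ ε k x a +
        log (Fintype.card A) / η := by
  have hpol := softmaxPol_mem_stdSimplex η (Ψ k) x
  have hsplit : polApply (softmaxPol η (Ψ k)) (Ψ k) x =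
      polApply (softmaxPol η (Ψ k)) (dppOffset P γ η Qs Ψ ε k) x -
        k * (maxValue Qs x - polApply (softmaxPol η (Ψ k)) Qs x) + dppDrift η Qs Ψ k x := by
    simp only [polApply, hΨ.eq_offset_sub_gap_add_drift hQs k x, mul_add, mul_sub,
      sum_add_distrib, sum_sub_distrib, ← sum_mul, hpol.2, mul_sum, mul_left_comm (k : ℝ)]
    ring
  linarith [hΨ.le_polApply_softmaxPol hQs hη k ha,
    polApply_le_maxValue hpol (dppOffset P γ η Qs Ψ ε k)]

variable [Nonempty X] (hP : ∀ x a, P x a ∈ stdSimplex ℝ X) (hγ0 : 0 ≤ γ) (hη : 0 < η) {V : ℝ}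
  (hΨ0 : supNorm (Ψ 0) ≤ V) (hQsV : supNorm Qs ≤ V)
include hP hγ0 hη hΨ0 hQsV

lemma spanSeminorm_dppDrift_succ_le (k : ℕ) :
    spanSeminorm (dppDrift η Qs Ψ (k + 1)) ≤ γ * spanSeminorm (dppDrift η Qs Ψ k) +
      (4 * V + log (Fintype.card A) / η + 2 * supNorm (accErr ε k)) := by
  refine spanSeminorm_le fun x y => ?_
  obtain ⟨a, -, ha⟩ := exists_mem_eq_sup' univ_nonempty (Qs x)
  obtain ⟨b, -, hb⟩ := exists_mem_eq_sup' univ_nonempty (dppOffset P γ η Qs Ψ ε k y)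
  have hx := hΨ.le_polApply_softmaxPol hQs hη k ha.symm
  have hy := hΨ.polApply_softmaxPol_le hQs k y
  rw [maxValue, hb] at hy
  have hW := sub_le_spanSeminorm (Function.uncurry (dppOffset P γ η Qs Ψ ε k)) (y, b) (x, a)
  simp only [Function.uncurry_apply_pair] at hW
  have hVx := le_of_abs_le (abs_maxValue_le_supNorm Qs x)
  have hVy := neg_le_of_abs_le (abs_maxValue_le_supNorm Qs y)
  rw [dppDrift_succ, dppDrift_succ]
  linarith [spanSeminorm_dppOffset_le (η := η) (Qs := Qs) (ε := ε) hP hγ0 hΨ0 k]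

lemma succ_mul_gap_le (k : ℕ) (x : X) :
    (k + 1) * (maxValue Qs x - polApply (softmaxPol η (Ψ k)) Qs x) ≤
      γ * spanSeminorm (dppDrift η Qs Ψ k) +
        (4 * V + log (Fintype.card A) / η + 2 * supNorm (accErr ε k)) := by
  obtain ⟨a, -, ha⟩ := exists_mem_eq_sup' univ_nonempty (Qs x)
  obtain ⟨b, -, hb⟩ := exists_mem_eq_sup' univ_nonempty (dppOffset P γ η Qs Ψ ε k x)
  have hgap := hΨ.mul_gap_le hQs hη k ha.symm
  rw [show maxValue (dppOffset P γ η Qs Ψ ε k) x = _ from hb] at hgap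
  have hW := sub_le_spanSeminorm (Function.uncurry (dppOffset P γ η Qs Ψ ε k)) (x, b) (x, a)
  simp only [Function.uncurry_apply_pair] at hW
  have hmax := le_of_abs_le (abs_maxValue_le_supNorm Qs x)
  have hpol : -V ≤ polApply (softmaxPol η (Ψ k)) Qs x :=
    le_sum_mul_of_forall_le (softmaxPol_mem_stdSimplex η (Ψ k) x)
      fun a => (neg_le_neg hQsV).trans (neg_le_of_abs_le (abs_le_supNorm Qs x a))
  linarith [spanSeminorm_dppOffset_le (η := η) (Qs := Qs) (ε := ε) hP hγ0 hΨ0 k]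

lemma succ_mul_gap_le_sum (k : ℕ) (x : X) :
    (k + 1) * (maxValue Qs x - polApply (softmaxPol η (Ψ k)) Qs x) ≤
      ∑ j ∈ range (k + 1),
        γ ^ (k - j) * (4 * V + log (Fintype.card A) / η + 2 * supNorm (accErr ε j)) :=
  (hΨ.succ_mul_gap_le hQs hP hγ0 hη hΨ0 hQsV k x).trans <|
    mul_add_le_sum_pow_mul (o := fun k => spanSeminorm (dppDrift η Qs Ψ k)) hγ0
      (spanSeminorm_le fun x y => by simp [dppDrift])
      (hΨ.spanSeminorm_dppDrift_succ_le hQs hP hγ0 hη hΨ0 hQsV) k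

end IsDPPIteration

end DPP

theorem approx_dpp_performance_loss_bound_general
    {X A : Type*} [Fintype X] [Fintype A] [Nonempty X] [Nonempty A]
    (P : X → A → X → ℝ) (hP0 : ∀ x a x', 0 ≤ P x a x') (hP1 : ∀ x a, ∑ x', P x a x' = 1)
    (r : X → A → ℝ) (Rmax : ℝ) (hr : ∀ x a, |r x a| ≤ Rmax)
    (γ : ℝ) (hγ0 : 0 ≤ γ) (hγ1 : γ < 1)
    (Vmax : ℝ) (hV : Vmax = Rmax / (1 - γ))
    (η : ℝ) (hη : 0 < η)
    (ε : ℕ → X → A → ℝ)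
    (E : ℕ → X → A → ℝ)
    (hE : ∀ k x a, E k x a = ∑ j ∈ Finset.range (k + 1), ε j x a)
    (Ψ : ℕ → X → A → ℝ) (hΨ0 : supNorm (Ψ 0) ≤ Vmax)
    (pol : ℕ → X → A → ℝ) (hpol : ∀ k, pol k = softmaxPol η (Ψ k))
    (hΨ : ∀ k x a, Ψ (k + 1) x a =
      Ψ k x a + bellman P r γ (pol k) (Ψ k) x a - polApply (pol k) (Ψ k) x + ε k x a)
    (Qstar : X → A → ℝ) (hQstar : bellmanOpt P r γ Qstar = Qstar)
    (Qpi : ℕ → X → A → ℝ) (hQpi : ∀ k, bellman P r γ (pol k) (Qpi k) = Qpi k) :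
    ∀ k : ℕ, supNorm (fun x a => Qstar x a - Qpi k x a) ≤
      (1 / ((1 - γ) * ((k : ℝ) + 1))) *
        (2 * γ * (4 * Vmax + Real.log (Fintype.card A) / η) / (1 - γ) +
          2 * ∑ j ∈ Finset.range (k + 1), γ ^ (k - j) * supNorm (E j)) := by
  obtain rfl : pol = fun k => softmaxPol η (Ψ k) := funext hpol
  obtain rfl : E = fun j => accErr ε (j + 1) := funext fun j => funext₂ (hE j)
  replace hΨ : IsDPPIteration P r γ η ε Ψ := hΨ
  intro k
  have hP : ∀ x a, P x a ∈ stdSimplex ℝ X := fun x a => ⟨hP0 x a, hP1 x a⟩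
  have hQV : supNorm Qstar ≤ Vmax := hV ▸ supNorm_le_of_bellmanOpt_eq hP hr hγ0 hγ1 hQstar
  have hB : 0 ≤ 4 * Vmax + log (Fintype.card A) / η := by
    have := (supNorm_nonneg Qstar).trans hQV
    have : 0 ≤ log (Fintype.card A) := log_natCast_nonneg _
    positivity
  have hk : (0 : ℝ) < k + 1 := by positivity
  have hloss := one_sub_mul_supNorm_sub_le hP hγ0 (softmaxPol_mem_stdSimplex η (Ψ k)) hQstar
    (hQpi k) fun x => (le_div_iff₀' hk).2 (hΨ.succ_mul_gap_le_sum hQstar hP hγ0 hη hΨ0 hQV k x)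
  rw [mul_div_assoc', le_div_iff₀ hk] at hloss
  beta_reduce
  rw [one_div, ← div_eq_inv_mul, le_div_iff₀' (mul_pos (sub_pos.2 hγ1) hk)]
  calc (1 - γ) * (k + 1) * supNorm (fun x a => Qstar x a - Qpi k x a)
      = (1 - γ) * supNorm (fun x a => Qstar x a - Qpi k x a) * (k + 1) := by ring
    _ ≤ _ := hloss
    _ ≤ _ := mul_sum_pow_mul_add_supNorm_accErr_le hγ0 hγ1 hB ε k
    _ ≤ _ := by gcongr; linarith

/-- Theorem 3 of the paper: `ℓ∞`-norm performance-loss bound of approximate DPP. -/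
theorem approx_dpp_performance_loss_bound
    {X A : Type*} [Fintype X] [Fintype A] [Nonempty X] [Nonempty A]
    (P : X → A → X → ℝ) (hP0 : ∀ x a x', 0 ≤ P x a x') (hP1 : ∀ x a, ∑ x', P x a x' = 1)
    (r : X → A → ℝ) (Rmax : ℝ) (hR : 0 < Rmax) (hr : ∀ x a, |r x a| ≤ Rmax)
    (γ : ℝ) (hγ0 : 0 ≤ γ) (hγ1 : γ < 1)
    (Vmax : ℝ) (hV : Vmax = Rmax / (1 - γ))
    (η : ℝ) (hη : 0 < η)
    (ε : ℕ → X → A → ℝ)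
    (E : ℕ → X → A → ℝ)
    (hE : ∀ k x a, E k x a = ∑ j ∈ Finset.range (k + 1), ε j x a)
    (Ψ : ℕ → X → A → ℝ) (hΨ0 : supNorm (Ψ 0) ≤ Vmax)
    (pol : ℕ → X → A → ℝ) (hpol : ∀ k, pol k = softmaxPol η (Ψ k))
    (hΨ : ∀ k x a, Ψ (k + 1) x a =
      Ψ k x a + bellman P r γ (pol k) (Ψ k) x a - polApply (pol k) (Ψ k) x + ε k x a)
    (Qstar : X → A → ℝ) (hQstar : bellmanOpt P r γ Qstar = Qstar)
    (Qpi : ℕ → X → A → ℝ) (hQpi : ∀ k, bellman P r γ (pol k) (Qpi k) = Qpi k) :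
    ∀ k : ℕ, supNorm (fun x a => Qstar x a - Qpi k x a) ≤
      (1 / ((1 - γ) * ((k : ℝ) + 1))) *
        (2 * γ * (4 * Vmax + Real.log (Fintype.card A) / η) / (1 - γ) +
          2 * ∑ j ∈ Finset.range (k + 1), γ ^ (k - j) * supNorm (E j)) :=
  approx_dpp_performance_loss_bound_general P hP0 hP1 r Rmax hr γ hγ0 hγ1 Vmax hV η hη ε E hE Ψ hΨ0
    pol hpol hΨ Qstar hQstar Qpi hQpi
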